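/- For all integers m, n ≥ 3, the incidence chromatic number of the toroidal grid satisfies χ_i(T_{m,n}) ≥ 5; moreover, χ_i(T_{m,n}) = 5 if and only if m ≡ 0 (mod 5) and n ≡ 0 (mod 5). -/

import Mathlib

open SimpleGraph

/-- The type of incidences of a graph `G`: pairs `(v, e)` where `e` is an edge of `G`
incident to the vertex `v`. -/
def Incidence {V : Type*} (G : SimpleGraph V) : Type _ :=
  {p : V × Sym2 V // p.2 ∈ G.edgeSet ∧ p.1 ∈ p.2}

/-- The graph on the incidences of `G` in which two distinct incidences `(v,e)` and `(w,f)`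
are adjacent iff `v = w`, or `e = f`, or the edge `vw` equals `e` or `f`. -/
def incidenceGraph {V : Type*} (G : SimpleGraph V) : SimpleGraph (Incidence G) where
  Adj i j := i ≠ j ∧
    (i.1.1 = j.1.1 ∨ i.1.2 = j.1.2 ∨ s(i.1.1, j.1.1) = i.1.2 ∨ s(i.1.1, j.1.1) = j.1.2)
  symm := by
    constructor
    rintro ⟨⟨v, e⟩, hi⟩ ⟨⟨w, f⟩, hj⟩ ⟨hne, h⟩
    refine ⟨fun h' => hne h'.symm, ?_⟩
    simp only at h ⊢
    rcases h with h | h | h | h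
    · exact Or.inl h.symm
    · exact Or.inr (Or.inl h.symm)
    · exact Or.inr (Or.inr (Or.inr ((Sym2.eq_swap).trans h)))
    · exact Or.inr (Or.inr (Or.inl ((Sym2.eq_swap).trans h)))
  loopless := ⟨by intro i h; exact h.1 rfl⟩

/-- The incidence chromatic number of a graph: the least number of colors in a proper
coloring of its incidences. -/
noncomputable def incidenceChromaticNumber {V : Type*} (G : SimpleGraph V) : ℕ∞ :=
  (incidenceGraph G).chromaticNumber

/-- The square of a graph `G`: distinct vertices are adjacent iff they are at distance
at most 2 in `G`. -/
def SimpleGraph.square {V : Type*} (G : SimpleGraph V) : SimpleGraph V where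
  Adj u v := u ≠ v ∧ (G.Adj u v ∨ ∃ w, G.Adj u w ∧ G.Adj w v)
  symm := by
    constructor
    rintro u v ⟨hne, h | ⟨w, h1, h2⟩⟩
    · exact ⟨hne.symm, Or.inl h.symm⟩
    · exact ⟨hne.symm, Or.inr ⟨w, h2.symm, h1.symm⟩⟩
  loopless := ⟨by intro v h; exact h.1 rfl⟩

/-- The toroidal grid `T_{m,n} = C_m □ C_n`. -/
def toroidalGrid (m n : ℕ) : SimpleGraph (Fin m × Fin n) :=
  SimpleGraph.boxProd (SimpleGraph.cycleGraph m) (SimpleGraph.cycleGraph n)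

open Function

/-!
In a 4-regular graph the four incidences leaving a vertex `v` and any incidence entering `v`
form a 5-clique of the incidence graph, so `χ_i ≥ 5`. With exactly five colours every incidence
entering `v` gets the one colour missing at `v`; hence incidence 5-colourings of a 4-regular graph
are the same as proper 5-colourings of its square, `(u, uv)` receiving the colour of `v`.

On the torus such a colouring is injective on every cross `v, v ± e₁, v ± e₂`. The diagonal
vertex `v + e₁ + e₂` then repeats the colour of `v - e₁` or of `v - e₂`, and which of the two
happens is the same at every vertex. In the second case the colouring is invariant under
`e₁ + 2e₂` and `2e₁ - e₂` (the first case is the mirror image), hence under `5e₁` and `5e₂`.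
If `5 ∤ m`, then `e₁` is a multiple of `5e₁`, and a colouring invariant under `e₁` is not injective
on crosses. Conversely, `(a, b) ↦ a + 2b (mod 5)` colours the square properly when `5 ∣ m, n`.
-/

section IncidenceGraph

variable {V : Type*} {G : SimpleGraph V}

namespace Incidence

def ofAdj {u v : V} (h : G.Adj u v) : Incidence G :=
  ⟨(u, s(u, v)), h, Sym2.mem_mk_left u v⟩

noncomputable def head (i : Incidence G) : V := Sym2.Mem.other i.2.2

theorem head_ofAdj {u v : V} (h : G.Adj u v) : (ofAdj h).head = v :=
  Sym2.congr_right.mp (Sym2.other_spec _)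

theorem exists_eq_ofAdj (i : Incidence G) : ∃ (u v : V) (h : G.Adj u v), i = ofAdj h := by
  obtain ⟨⟨u, e⟩, he, hu⟩ := i
  obtain ⟨v, rfl⟩ : ∃ v, e = s(u, v) := ⟨_, (Sym2.other_spec hu).symm⟩
  exact ⟨u, v, he, rfl⟩

theorem ofAdj_inj {u v u' v' : V} {h : G.Adj u v} {h' : G.Adj u' v'} :
    ofAdj h = ofAdj h' ↔ u = u' ∧ v = v' := by
  constructor
  · intro he
    obtain ⟨rfl, he⟩ := Prod.mk.inj (congrArg Subtype.val he)
    exact ⟨rfl, Sym2.congr_right.mp he⟩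
  · rintro ⟨rfl, rfl⟩
    rfl

def fan {u v : V} (h : G.Adj u v) : Option (G.neighborSet v) → Incidence G
  | none => ofAdj h
  | some w => ofAdj w.2

end Incidence

open Incidence

theorem incidenceGraph_adj_ofAdj {u v u' v' : V} (h : G.Adj u v) (h' : G.Adj u' v') :
    (incidenceGraph G).Adj (ofAdj h) (ofAdj h') ↔
      (u, v) ≠ (u', v') ∧ (u = u' ∨ v = u' ∨ u = v') := by
  have hne : ofAdj h ≠ ofAdj h' ↔ (u, v) ≠ (u', v') := by
    rw [Ne, ofAdj_inj, Ne, Prod.mk.injEq]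
  change ofAdj h ≠ ofAdj h' ∧ (u = u' ∨ s(u, v) = s(u', v') ∨ s(u, u') = s(u, v) ∨
    s(u, u') = s(u', v')) ↔ _
  rw [hne]
  refine and_congr_right fun _ => ?_
  have e₁ : s(u, u') = s(u, v) ↔ v = u' := Sym2.congr_right.trans eq_comm
  have e₂ : s(u, u') = s(u', v') ↔ u = v' := by rw [Sym2.eq_swap]; exact Sym2.congr_right
  rw [e₁, e₂, Sym2.eq_iff]
  tauto

theorem SimpleGraph.Adj.square {u v : V} (h : G.Adj u v) : G.square.Adj u v := ⟨h.ne, Or.inl h⟩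

theorem SimpleGraph.square_adj_of_adj_of_adj {u v w : V} (hu : G.Adj w u) (hv : G.Adj w v)
    (huv : u ≠ v) : G.square.Adj u v :=
  ⟨huv, Or.inr ⟨w, hu.symm, hv⟩⟩

theorem Incidence.pairwise_adj_fan {u v : V} (h : G.Adj u v) :
    Pairwise fun i j => (incidenceGraph G).Adj (fan h i) (fan h j) := by
  rintro (_ | ⟨w, hw⟩) (_ | ⟨w', hw'⟩) hij
  · exact absurd rfl hij
  · exact (incidenceGraph_adj_ofAdj h hw').mpr
      ⟨fun e => h.ne (Prod.mk.inj e).1, Or.inr (Or.inl rfl)⟩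
  · exact (incidenceGraph_adj_ofAdj hw h).mpr
      ⟨fun e => h.ne (Prod.mk.inj e).1.symm, Or.inr (Or.inr rfl)⟩
  · refine (incidenceGraph_adj_ofAdj hw hw').mpr ⟨fun e => hij ?_, Or.inl rfl⟩
    obtain rfl := (Prod.mk.inj e).2
    rfl

theorem degree_add_one_le_incidenceChromaticNumber {u v : V} [Fintype (G.neighborSet v)]
    (h : G.Adj u v) : ((G.degree v + 1 : ℕ) : ℕ∞) ≤ incidenceChromaticNumber G :=
  le_chromaticNumber_of_pairwise_adj (by
    rw [Nat.card_eq_fintype_card, Fintype.card_option, card_neighborSet_eq_degree])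
    (fan h) (pairwise_adj_fan h)

/-- With `deg v + 1` colours, the incidences leaving `v` use all colours but one, and every
incidence entering `v` must take that remaining colour. -/
theorem SimpleGraph.Coloring.ofAdj_eq_of_card_eq {α : Type*} [Fintype α] {u u' v : V}
    [Fintype (G.neighborSet v)] (C : (incidenceGraph G).Coloring α)
    (hα : Fintype.card α = G.degree v + 1) (h : G.Adj u v) (h' : G.Adj u' v) :
    C (ofAdj h) = C (ofAdj h') := by
  have hbij : Bijective (C ∘ fan h) :=
    (Fintype.bijective_iff_injective_and_card _).mpr
      ⟨C.injective_comp_of_pairwise_adj _ (pairwise_adj_fan h),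
        by rw [Fintype.card_option, card_neighborSet_eq_degree, hα]⟩
  obtain ⟨_ | w, hw⟩ := hbij.2 (C (ofAdj h'))
  · exact hw
  · exact absurd hw (C.valid (pairwise_adj_fan h' (Option.some_ne_none w)))

noncomputable def Incidence.headHom : incidenceGraph G →g G.square where
  toFun := head
  map_rel' {i j} hij := by
    obtain ⟨u, v, h, rfl⟩ := i.exists_eq_ofAdj
    obtain ⟨u', v', h', rfl⟩ := j.exists_eq_ofAdj
    rw [head_ofAdj, head_ofAdj]
    obtain ⟨hne, rfl | rfl | rfl⟩ := (incidenceGraph_adj_ofAdj h h').mp hij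
    · exact square_adj_of_adj_of_adj h h' fun e => hne (e ▸ rfl)
    · exact h'.square
    · exact h.square.symm

theorem SimpleGraph.Colorable.incidenceGraph {k : ℕ} (hC : G.square.Colorable k) :
    (incidenceGraph G).Colorable k :=
  hC.of_hom headHom

theorem SimpleGraph.IsRegularOfDegree.colorable_square [G.LocallyFinite] {d : ℕ}
    (hG : G.IsRegularOfDegree d) (hC : (incidenceGraph G).Colorable (d + 1)) :
    G.square.Colorable (d + 1) := by
  obtain ⟨C⟩ := hC
  have hcol : ∀ v, ∃ a, ∀ u (h : G.Adj u v), C (ofAdj h) = a := by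
    intro v
    by_cases hv : ∃ u, G.Adj u v
    · obtain ⟨u, hu⟩ := hv
      exact ⟨C (ofAdj hu), fun u' h' => C.ofAdj_eq_of_card_eq (by simp [hG v]) h' hu⟩
    · exact ⟨0, fun u h => absurd ⟨u, h⟩ hv⟩
  choose σ hσ using hcol
  refine ⟨Coloring.mk σ ?_⟩
  rintro a b ⟨hab, hadj | ⟨w, hw₁, hw₂⟩⟩
  · rw [← hσ a b hadj.symm, ← hσ b a hadj]
    exact C.valid ((incidenceGraph_adj_ofAdj _ _).mpr
      ⟨fun e => hab (Prod.mk.inj e).1.symm, Or.inr (Or.inl rfl)⟩)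
  · rw [← hσ a w hw₁.symm, ← hσ b w hw₂]
    exact C.valid ((incidenceGraph_adj_ofAdj _ _).mpr
      ⟨fun e => hab (Prod.mk.inj e).2, Or.inl rfl⟩)

theorem SimpleGraph.IsRegularOfDegree.colorable_incidenceGraph_iff [G.LocallyFinite] {d : ℕ}
    (hG : G.IsRegularOfDegree d) :
    (incidenceGraph G).Colorable (d + 1) ↔ G.square.Colorable (d + 1) :=
  ⟨hG.colorable_square, Colorable.incidenceGraph⟩

end IncidenceGraph

section Cross

variable {A α : Type*} [AddCommGroup A] {c : A → α} {x y : A}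

/-- For the torus and `x, y` the unit vectors, this says that `c` is a proper colouring of the
square of the grid. -/
def CrossInjective (c : A → α) (x y : A) : Prop :=
  ∀ v, Injective (c ∘ ![v, v + x, v - x, v + y, v - y])

def DiagEq (c : A → α) (x y v : A) : Prop := c (v + x + y) = c (v - y)

namespace CrossInjective

variable (hc : CrossInjective c x y)
include hc

theorem swap : CrossInjective c y x := fun v => by
  have hperm : ![v, v + y, v - y, v + x, v - x] = ![v, v + x, v - x, v + y, v - y] ∘
      ![0, 3, 4, 1, 2] := by
    funext i; fin_cases i <;> rfl
  rw [hperm, ← comp_assoc]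
  exact (hc v).comp (by decide)

theorem neg_right : CrossInjective c x (-y) := fun v => by
  have hperm : ![v, v + x, v - x, v + -y, v - -y] = ![v, v + x, v - x, v + y, v - y] ∘
      ![0, 1, 2, 4, 3] := by
    funext i; fin_cases i <;> simp [sub_eq_add_neg]
  rw [hperm, ← comp_assoc]
  exact (hc v).comp (by decide)

theorem not_diagEq_and_diagEq (v : A) : ¬ (DiagEq c x y v ∧ DiagEq c y x v) := by
  rintro ⟨h₁, h₂⟩
  have := (hc v).ne (show (2 : Fin 5) ≠ 4 by decide)
  rw [DiagEq, add_right_comm] at h₂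
  exact this (h₂.symm.trans h₁)

theorem five_dvd_addOrderOf (h : Periodic c (5 • x)) : 5 ∣ addOrderOf x := by
  by_contra hdvd
  -- otherwise `x` is a multiple of `5 • x`, hence a period of `c`
  obtain ⟨k, hk⟩ := exists_nsmul_eq_self_of_coprime
    ((Nat.Prime.coprime_iff_not_dvd Nat.prime_five).mpr hdvd)
  have := (hc 0).ne (show (0 : Fin 5) ≠ 1 by decide)
  simp only [comp_apply, Matrix.cons_val, zero_add] at this
  exact this (by simpa [hk] using (h.nsmul k 0).symm)

variable [Fintype α] (hα : Fintype.card α = 5)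
include hα

/-- `v + x + y` is within distance two of `v`, `v + x` and `v + y`, so with five colours it
repeats the colour of `v - x` or of `v - y`. -/
theorem diagEq_or_diagEq (v : A) : DiagEq c x y v ∨ DiagEq c y x v := by
  have hbij : Bijective (c ∘ ![v, v + x, v - x, v + y, v - y]) :=
    (Fintype.bijective_iff_injective_and_card _).mpr ⟨hc v, by simp [hα]⟩
  obtain ⟨i, hi⟩ := hbij.2 (c (v + x + y))
  rw [DiagEq, DiagEq, add_right_comm v y x]
  fin_cases i
  · have := (hc (v + x)).ne (show (2 : Fin 5) ≠ 3 by decide)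
    simp_all
  · have := (hc (v + x)).ne (show (0 : Fin 5) ≠ 3 by decide)
    simp_all
  · exact Or.inr hi.symm
  · have := (hc (v + y)).ne (show (0 : Fin 5) ≠ 1 by decide)
    simp_all [add_right_comm v y x]
  · exact Or.inl hi.symm

theorem diagEq_add_left {v : A} (h : DiagEq c y x v) : DiagEq c y x (v + x) := by
  refine (hc.diagEq_or_diagEq hα (v + x)).resolve_left fun h' => ?_
  rw [DiagEq, add_right_comm v y x] at h
  rcases hc.neg_right.diagEq_or_diagEq hα v with h'' | h''
  · have := (hc (v + x + y)).ne (show (1 : Fin 5) ≠ 2 by decide)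
    simp only [DiagEq, comp_apply, Matrix.cons_val] at this h' h''
    abel_nf at this h' h''
    exact this (h'.trans h'')
  · have := (hc (v + x)).ne (show (3 : Fin 5) ≠ 4 by decide)
    simp only [DiagEq, comp_apply, Matrix.cons_val] at this h''
    abel_nf at this h h''
    exact this (h.trans h''.symm)

theorem diagEq_add_right {v : A} (h : DiagEq c x y v) : DiagEq c x y (v + y) :=
  hc.swap.diagEq_add_left hα h

theorem diagEq_sub_left {v : A} (h : DiagEq c x y v) : DiagEq c x y (v - x) :=
  (hc.diagEq_or_diagEq hα (v - x)).resolve_right fun h' =>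
    hc.not_diagEq_and_diagEq v ⟨h, by simpa using hc.diagEq_add_left hα h'⟩

theorem diagEq_add_of_mem_closure {g : A} (hg : g ∈ AddSubmonoid.closure {-x, y}) :
    ∀ v, DiagEq c x y v → DiagEq c x y (v + g) := by
  induction hg using AddSubmonoid.closure_induction with
  | mem g hg =>
    rcases hg with rfl | rfl
    · intro v h
      simpa [sub_eq_add_neg] using hc.diagEq_sub_left hα h
    · exact fun v h => hc.diagEq_add_right hα h
  | zero => simp
  | add g g' _ _ ih ih' =>
    intro v h
    rw [← add_assoc]
    exact ih' _ (ih v h)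

/-- `DiagEq` everywhere is periodicity under `x + 2 • y`; the cross at `w + x` then forces the
period `2 • x - y` too, and these two periods generate `5 • x` and `5 • y`. -/
theorem periodic_of_forall_diagEq (h : ∀ v, DiagEq c x y v) :
    Periodic c (5 • x) ∧ Periodic c (5 • y) := by
  have hA : Periodic c (x + 2 • y) := fun w => by
    have := h (w + y)
    simp only [DiagEq] at this
    abel_nf at this ⊢
    exact this
  have hB : Periodic c (2 • x - y) := fun w => by
    rcases hc.neg_right.diagEq_or_diagEq hα (w + x) with h' | h'
    · have hA' := hA (w - y)
      have := (hc (w + x - y)).ne (show (1 : Fin 5) ≠ 2 by decide)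
      simp only [DiagEq, comp_apply, Matrix.cons_val] at h' this
      abel_nf at h' hA' this
      exact absurd (h'.trans hA') this
    · simp only [DiagEq] at h'
      abel_nf at h' ⊢
      exact h'
  constructor
  · have := hA.add_period (hB.nsmul 2)
    rwa [show x + 2 • y + 2 • (2 • x - y) = 5 • x by abel] at this
  · have := (hA.nsmul 2).sub_period hB
    rwa [show 2 • (x + 2 • y) - (2 • x - y) = 5 • y by abel] at this

/-- `DiagEq c x y` propagates along `-x` and `y`, so it holds everywhere or nowhere; in the
second case `DiagEq c y x` holds everywhere. -/
theorem periodic_five_nsmul (hgen : AddSubmonoid.closure {-x, y} = ⊤) :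
    Periodic c (5 • x) ∧ Periodic c (5 • y) := by
  by_cases hex : ∃ v, DiagEq c x y v
  · obtain ⟨v, hv⟩ := hex
    refine hc.periodic_of_forall_diagEq hα fun w => ?_
    have := hc.diagEq_add_of_mem_closure hα (hgen ▸ AddSubmonoid.mem_top (w - v)) v hv
    rwa [add_sub_cancel] at this
  · exact (hc.swap.periodic_of_forall_diagEq hα fun v =>
      (hc.diagEq_or_diagEq hα v).resolve_left fun h => hex ⟨v, h⟩).symm

end CrossInjective

end Cross

section Cayley

variable {A α : Type*} [AddCommGroup A] {G : SimpleGraph A} {x y : A}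

theorem SimpleGraph.Coloring.crossInjective (C : G.square.Coloring α)
    (hx : ∀ v, G.Adj v (v + x)) (hy : ∀ v, G.Adj v (v + y))
    (hx₂ : x + x ≠ 0) (hy₂ : y + y ≠ 0) (hxy : x ≠ y) (hxy' : x + y ≠ 0) :
    CrossInjective C x y := fun v => by
  refine C.injective_comp_of_pairwise_adj _ fun i j hij => ?_
  have a₁ := hx v
  have a₂ : G.Adj v (v - x) := by simpa using (hx (v - x)).symm
  have a₃ := hy v
  have a₄ : G.Adj v (v - y) := by simpa using (hy (v - y)).symm
  have d₁₂ : v + x ≠ v - x := by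
    rw [sub_eq_add_neg, Ne, add_right_inj, eq_neg_iff_add_eq_zero]; exact hx₂
  have d₁₃ : v + x ≠ v + y := by rwa [Ne, add_right_inj]
  have d₁₄ : v + x ≠ v - y := by
    rw [sub_eq_add_neg, Ne, add_right_inj, eq_neg_iff_add_eq_zero]; exact hxy'
  have d₂₃ : v - x ≠ v + y := by
    rw [sub_eq_add_neg, Ne, add_right_inj, neg_eq_iff_add_eq_zero]; exact hxy'
  have d₂₄ : v - x ≠ v - y := by rwa [Ne, sub_right_inj]
  have d₃₄ : v + y ≠ v - y := by
    rw [sub_eq_add_neg, Ne, add_right_inj, eq_neg_iff_add_eq_zero]; exact hy₂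
  fin_cases i <;> fin_cases j <;>
    first
    | exact absurd rfl hij
    | exact Adj.square ‹_›
    | exact (Adj.square ‹_›).symm
    | exact square_adj_of_adj_of_adj ‹_› ‹_› ‹_›
    | exact (square_adj_of_adj_of_adj ‹_› ‹_› ‹_›).symm

theorem SimpleGraph.square_colorable_of_addMonoidHom {B : Type*} [AddCommGroup B] [Fintype B]
    (φ : A →+ B) (S : Set A) (hS : ∀ u v, G.Adj u v → v - u ∈ S) (hφ : ∀ s ∈ S, φ s ≠ 0)
    (hφ₂ : ∀ s ∈ S, ∀ t ∈ S, s + t ≠ 0 → φ (s + t) ≠ 0) :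
    G.square.Colorable (Fintype.card B) := by
  refine (Coloring.mk φ ?_).colorable
  rintro u v ⟨huv, hadj | ⟨w, hw₁, hw₂⟩⟩ hφuv
  · exact hφ _ (hS u v hadj) (by rw [map_sub, hφuv, sub_self])
  · refine hφ₂ _ (hS u w hw₁) _ (hS w v hw₂) ?_ ?_
    · rwa [sub_add_sub_cancel', sub_ne_zero, ne_comm]
    · rw [sub_add_sub_cancel', map_sub, hφuv, sub_self]

end Cayley

section Torus

variable {m n : ℕ}

instance (m n : ℕ) : (toroidalGrid m n).LocallyFinite := fun v =>
  inferInstanceAs (Fintype ((cycleGraph m □ cycleGraph n).neighborSet v))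

theorem cycleGraph_adj_iff_sub {a a' : Fin (m + 2)} :
    (cycleGraph (m + 2)).Adj a a' ↔ a' - a = 1 ∨ a' - a = -1 := by
  rw [cycleGraph_adj, ← neg_sub a' a, neg_eq_iff_eq_neg, or_comm]

theorem toroidalGrid_adj {u v : Fin (m + 2) × Fin (n + 2)} :
    (toroidalGrid (m + 2) (n + 2)).Adj u v ↔
      v - u ∈ ({(1, 0), -(1, 0), (0, 1), -(0, 1)} : Set (Fin (m + 2) × Fin (n + 2))) := by
  obtain ⟨a, b⟩ := u
  obtain ⟨a', b'⟩ := v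
  simp only [toroidalGrid, boxProd_adj, cycleGraph_adj_iff_sub, Set.mem_insert_iff,
    Set.mem_singleton_iff, Prod.ext_iff, Prod.fst_sub, Prod.snd_sub, Prod.fst_neg, Prod.snd_neg,
    neg_zero, sub_eq_zero]
  tauto

theorem toroidalGrid_isRegularOfDegree : (toroidalGrid (m + 3) (n + 3)).IsRegularOfDegree 4 :=
  fun v => by
    show (cycleGraph (m + 3) □ cycleGraph (n + 3)).degree v = 4
    rw [degree_boxProd, cycleGraph_degree_three_le, cycleGraph_degree_three_le]

open Fin.NatCast in
theorem closure_neg_fst_snd_eq_top :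
    AddSubmonoid.closure {-(1, 0), (0, 1)} = (⊤ : AddSubmonoid (Fin (m + 1) × Fin (n + 1))) := by
  rw [← AddSubgroup.closure_toAddSubmonoid_of_finite, eq_top_iff]
  set H := AddSubgroup.closure ({-(1, 0), (0, 1)} : Set (Fin (m + 1) × Fin (n + 1)))
  have h₁ : ((1, 0) : Fin (m + 1) × Fin (n + 1)) ∈ H := by
    simpa using H.neg_mem (AddSubgroup.subset_closure (Set.mem_insert _ _))
  have h₂ : ((0, 1) : Fin (m + 1) × Fin (n + 1)) ∈ H :=
    AddSubgroup.subset_closure (by simp)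
  have hcast : ∀ k l : ℕ, ((k : Fin (m + 1)), (l : Fin (n + 1))) ∈ H := by
    intro k l
    induction k with
    | zero =>
      induction l with
      | zero => simp only [Nat.cast_zero]; exact H.zero_mem
      | succ l ih => simpa using H.add_mem ih h₂
    | succ k ih => simpa using H.add_mem ih h₁
  rintro ⟨a, b⟩ -
  simpa using hcast a.val b.val

theorem addOrderOf_fst_one : addOrderOf ((1, 0) : Fin (m + 1) × Fin (n + 1)) = m + 1 := by
  rw [Prod.addOrderOf_mk, addOrderOf_zero, Nat.lcm_one_right]
  exact ZMod.addOrderOf_one (m + 1)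

theorem addOrderOf_snd_one : addOrderOf ((0, 1) : Fin (m + 1) × Fin (n + 1)) = n + 1 := by
  rw [Prod.addOrderOf_mk, addOrderOf_zero, Nat.lcm_one_left]
  exact ZMod.addOrderOf_one (n + 1)

theorem Fin.one_add_one_ne_zero : (1 : Fin (m + 3)) + 1 ≠ 0 := by
  simp [Fin.ext_iff, Fin.val_add, Nat.mod_eq_of_lt (show 2 < m + 3 by omega)]

theorem toroidalGrid_crossInjective {α : Type*}
    (C : (toroidalGrid (m + 3) (n + 3)).square.Coloring α) : CrossInjective C (1, 0) (0, 1) :=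
  C.crossInjective (fun _ => toroidalGrid_adj.mpr (by simp))
    (fun _ => toroidalGrid_adj.mpr (by simp))
    (by simp [Prod.ext_iff, Fin.one_add_one_ne_zero])
    (by simp [Prod.ext_iff, Fin.one_add_one_ne_zero]) (by simp) (by simp)

theorem five_dvd_of_toroidalGrid_square_colorable
    (h : (toroidalGrid (m + 3) (n + 3)).square.Colorable 5) : 5 ∣ m + 3 ∧ 5 ∣ n + 3 := by
  obtain ⟨C⟩ := h
  have hc := toroidalGrid_crossInjective C
  obtain ⟨h₁, h₂⟩ := hc.periodic_five_nsmul (Fintype.card_fin 5) closure_neg_fst_snd_eq_top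
  exact ⟨addOrderOf_fst_one ▸ hc.five_dvd_addOrderOf h₁,
    addOrderOf_snd_one ▸ hc.swap.five_dvd_addOrderOf h₂⟩

theorem toroidalGrid_square_colorable_of_five_dvd (hm : 5 ∣ m + 3) (hn : 5 ∣ n + 3) :
    (toroidalGrid (m + 3) (n + 3)).square.Colorable 5 := by
  let f : Fin (m + 3) →+ ZMod 5 := (ZMod.castHom hm (ZMod 5)).toAddMonoidHom.comp
    (ZMod.finEquiv (m + 3)).toAddEquiv.toAddMonoidHom
  let g : Fin (n + 3) →+ ZMod 5 := (ZMod.castHom hn (ZMod 5)).toAddMonoidHom.comp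
    (ZMod.finEquiv (n + 3)).toAddEquiv.toAddMonoidHom
  have hf : f 1 = 1 := map_one (ZMod.castHom hm (ZMod 5))
  have hg : g 1 = 1 := map_one (ZMod.castHom hn (ZMod 5))
  let φ := f.coprod (2 • g)
  have hφ₁ : φ (1, 0) = 1 := by simp [φ, hf]
  have hφ₂ : φ (0, 1) = 2 := by simp [φ, hg]
  simpa using square_colorable_of_addMonoidHom φ _ (fun u v => toroidalGrid_adj.mp)
    (by rintro s (rfl | rfl | rfl | rfl) <;> simp only [map_neg, hφ₁, hφ₂] <;> decide)
    (by
      rintro s (rfl | rfl | rfl | rfl) t (rfl | rfl | rfl | rfl) hst <;>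
        simp only [map_add, map_neg, hφ₁, hφ₂] <;> first | decide | simp at hst)

theorem toroidalGrid_square_colorable_five_iff :
    (toroidalGrid (m + 3) (n + 3)).square.Colorable 5 ↔ 5 ∣ m + 3 ∧ 5 ∣ n + 3 :=
  ⟨five_dvd_of_toroidalGrid_square_colorable,
    fun h => toroidalGrid_square_colorable_of_five_dvd h.1 h.2⟩

end Torus

theorem incidence_chromatic_toroidal_grid_ge_five (m n : ℕ) (hm : 3 ≤ m) (hn : 3 ≤ n) :
    5 ≤ incidenceChromaticNumber (toroidalGrid m n) ∧
      (incidenceChromaticNumber (toroidalGrid m n) = 5 ↔ (m % 5 = 0 ∧ n % 5 = 0)) := by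
  obtain ⟨m, rfl⟩ := Nat.exists_eq_add_of_le' hm
  obtain ⟨n, rfl⟩ := Nat.exists_eq_add_of_le' hn
  have hreg := toroidalGrid_isRegularOfDegree (m := m) (n := n)
  have hadj : (toroidalGrid (m + 3) (n + 3)).Adj (-(1, 0)) 0 := toroidalGrid_adj.mpr (by simp)
  have hlb : 5 ≤ incidenceChromaticNumber (toroidalGrid (m + 3) (n + 3)) := by
    simpa [hreg 0] using degree_add_one_le_incidenceChromaticNumber hadj
  refine ⟨hlb, ?_⟩
  rw [← Nat.dvd_iff_mod_eq_zero, ← Nat.dvd_iff_mod_eq_zero,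
    ← toroidalGrid_square_colorable_five_iff, ← hreg.colorable_incidenceGraph_iff,
    ← chromaticNumber_le_iff_colorable]
  exact ⟨fun h => h.le, fun h => le_antisymm h hlb⟩
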